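/- Let Γ be a group acting linearly on real vector spaces V and W, let η : Γ → {1, −1} be a group homomorphism with kernel Γ₊, and fix δ ∈ Γ with η(δ) = −1. Suppose u₁, …, u_s : V → ℝ are Γ₊-invariant functions such that every Γ₊-invariant function V → ℝ is a polynomial in u₁, …, u_s, and suppose H₀, …, H_r are Γ₊-equivariant maps V → W such that every Γ₊-equivariant map g : V → W can be written g = Σ_j q_j H_j with each q_j a Γ₊-invariant function. Set ũ₀ = 1 (the constant function) and ũᵢ = S(uᵢ) for i = 1, …, s. Then every Γ_η-equivariant map g : V → W can be written as g = Σ_{i=0}^{s} Σ_{j=0}^{r} p_{ij} · S⃗(ũᵢ · H_j) with each p_{ij} : V → ℝ a Γ-invariant function. -/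
import Mathlib


/-- The Reynolds operator `R(f)(x) = (f(x) + f(δ·x))/2`. -/
noncomputable def reynoldsR {Γ V : Type*} [Group Γ] [AddCommGroup V] [Module ℝ V]
    [DistribMulAction Γ V] [SMulCommClass Γ ℝ V] (δ : Γ) (f : V → ℝ) : V → ℝ :=
  fun x => (f x + f (δ • x)) / 2

/-- The η-Reynolds operator `S(f)(x) = (f(x) − f(δ·x))/2`. -/
noncomputable def reynoldsS {Γ V : Type*} [Group Γ] [AddCommGroup V] [Module ℝ V]
    [DistribMulAction Γ V] [SMulCommClass Γ ℝ V] (δ : Γ) (f : V → ℝ) : V → ℝ :=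
  fun x => (f x - f (δ • x)) / 2

/-- The vector Reynolds operator `R⃗(g)(x) = (g(x) + δ⁻¹·g(δ·x))/2`. -/
noncomputable def reynoldsRvec {Γ V W : Type*} [Group Γ]
    [AddCommGroup V] [Module ℝ V] [AddCommGroup W] [Module ℝ W]
    [DistribMulAction Γ V] [SMulCommClass Γ ℝ V]
    [DistribMulAction Γ W] [SMulCommClass Γ ℝ W]
    (δ : Γ) (g : V → W) : V → W :=
  fun x => (2⁻¹ : ℝ) • (g x + δ⁻¹ • g (δ • x))

/-- The vector η-Reynolds operator `S⃗(g)(x) = (g(x) − δ⁻¹·g(δ·x))/2`. -/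
noncomputable def reynoldsSvec {Γ V W : Type*} [Group Γ]
    [AddCommGroup V] [Module ℝ V] [AddCommGroup W] [Module ℝ W]
    [DistribMulAction Γ V] [SMulCommClass Γ ℝ V]
    [DistribMulAction Γ W] [SMulCommClass Γ ℝ W]
    (δ : Γ) (g : V → W) : V → W :=
  fun x => (2⁻¹ : ℝ) • (g x - δ⁻¹ • g (δ • x))

lemma exists_divided_diff (s : ℕ) (Q : (Fin s → ℝ) → ℝ) :
    ∃ D : Fin s → (Fin s → ℝ) → (Fin s → ℝ) → ℝ,
      ∀ a b : Fin s → ℝ, Q a - Q b = ∑ i : Fin s, (a i - b i) * D i a b := by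
  classical
  set w : (Fin s → ℝ) → (Fin s → ℝ) → ℕ → (Fin s → ℝ) :=
    fun a b k j => if (j : ℕ) < k then b j else a j with hw
  refine ⟨fun i a b => if a i = b i then 0 else
      (Q (w a b i) - Q (w a b (i + 1))) / (a i - b i), fun a b => ?_⟩
  have hterm : ∀ i : Fin s, (a i - b i) *
      (if a i = b i then 0 else (Q (w a b i) - Q (w a b (i + 1))) / (a i - b i))
      = Q (w a b (i : ℕ)) - Q (w a b ((i : ℕ) + 1)) := by
    intro i
    by_cases h : a i = b i
    · have hww : w a b (i : ℕ) = w a b ((i : ℕ) + 1) := by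
        funext j
        simp only [hw]
        rcases lt_trichotomy (j : ℕ) (i : ℕ) with hj | hj | hj
        · simp [hj, Nat.lt_succ_of_lt hj]
        · have hji : j = i := Fin.ext hj
          subst hji
          simp [h]
        · have h1 : ¬ (j : ℕ) < (i : ℕ) := by omega
          have h2 : ¬ (j : ℕ) < (i : ℕ) + 1 := by omega
          simp [h1, h2]
      simp [h, hww]
    · rw [if_neg h]
      rw [mul_div_assoc']
      exact mul_div_cancel_left₀ _ (sub_ne_zero.mpr h)
  rw [Finset.sum_congr rfl (fun i _ => hterm i)]
  rw [Fin.sum_univ_eq_sum_range (fun k => Q (w a b k) - Q (w a b (k + 1))) s]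
  rw [Finset.sum_range_sub' (fun k => Q (w a b k)) s]
  have h0 : w a b 0 = a := by funext j; simp [hw]
  have hs : w a b s = b := by funext j; simp [hw, j.isLt]
  rw [h0, hs]

/-- correctness of the algorithm: if `u₁, …, u_s` generate the
`Γ₊`-invariant functions as polynomials and `H₀, …, H_r` generate the `Γ₊`-equivariant
maps over the `Γ₊`-invariants, then, with `ũ₀ = 1` and `ũᵢ = S(uᵢ)`, every
`Γ_η`-equivariant map `g` can be written `g = Σᵢ Σⱼ p_{ij} · S⃗(ũᵢ · H_j)` with each
`p_{ij}` a `Γ`-invariant function. -/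
theorem eta_equivariants_generated_by_algorithm
    {Γ V W : Type*} [Group Γ]
    [AddCommGroup V] [Module ℝ V] [AddCommGroup W] [Module ℝ W]
    [DistribMulAction Γ V] [SMulCommClass Γ ℝ V]
    [DistribMulAction Γ W] [SMulCommClass Γ ℝ W]
    (η : Γ →* ℝˣ) (hη : ∀ γ : Γ, (η γ : ℝ) = 1 ∨ (η γ : ℝ) = -1)
    (δ : Γ) (hδ : (η δ : ℝ) = -1)
    (s r : ℕ) (u : Fin s → V → ℝ) (H : Fin (r + 1) → V → W)
    (hu : ∀ i : Fin s, ∀ σ : Γ, (η σ : ℝ) = 1 → ∀ x : V, u i (σ • x) = u i x)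
    (huGen : ∀ f : V → ℝ,
      (∀ σ : Γ, (η σ : ℝ) = 1 → ∀ x : V, f (σ • x) = f x) →
      ∃ q : MvPolynomial (Fin s) ℝ,
        ∀ x : V, f x = MvPolynomial.eval (fun i => u i x) q)
    (hH : ∀ j : Fin (r + 1), ∀ σ : Γ, (η σ : ℝ) = 1 → ∀ x : V, H j (σ • x) = σ • H j x)
    (hHGen : ∀ g : V → W,
      (∀ σ : Γ, (η σ : ℝ) = 1 → ∀ x : V, g (σ • x) = σ • g x) →
      ∃ q : Fin (r + 1) → V → ℝ,
        (∀ j : Fin (r + 1), ∀ σ : Γ, (η σ : ℝ) = 1 → ∀ x : V, q j (σ • x) = q j x) ∧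
        ∀ x : V, g x = ∑ j : Fin (r + 1), q j x • H j x)
    (uT : Fin (s + 1) → V → ℝ)
    (huT0 : ∀ x : V, uT 0 x = 1)
    (huTsucc : ∀ i : Fin s, uT i.succ = reynoldsS δ (u i)) :
    ∀ g : V → W, (∀ γ : Γ, ∀ x : V, g (γ • x) = (η γ : ℝ) • (γ • g x)) →
      ∃ p : Fin (s + 1) → Fin (r + 1) → V → ℝ,
        (∀ i j, ∀ γ : Γ, ∀ x : V, p i j (γ • x) = p i j x) ∧
        ∀ x : V, g x = ∑ i : Fin (s + 1), ∑ j : Fin (r + 1),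
          p i j x • reynoldsSvec δ (fun y => uT i y • H j y) x := by
  intro g hg
  classical
  have hδδ : (η (δ * δ) : ℝ) = 1 := by
    rw [map_mul, Units.val_mul, hδ]; norm_num
  have hδinv : (η δ⁻¹ : ℝ) = -1 := by
    rw [map_inv, Units.val_inv_eq_inv_val, hδ]; norm_num
  -- f(δ•δ•x) = f x for Γ₊-invariant f
  have key2 : ∀ f : V → ℝ, (∀ σ : Γ, (η σ : ℝ) = 1 → ∀ x, f (σ • x) = f x) →
      ∀ x, f (δ • δ • x) = f x := by
    intro f hf x
    rw [← mul_smul]; exact hf _ hδδ x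
  have keyconj : ∀ f : V → ℝ, (∀ σ : Γ, (η σ : ℝ) = 1 → ∀ x, f (σ • x) = f x) →
      ∀ σ : Γ, (η σ : ℝ) = 1 → ∀ x, f (δ • σ • x) = f (δ • x) := by
    intro f hf σ hσ x
    have h1 : δ • σ • x = (δ * σ * δ⁻¹) • δ • x := by
      simp [mul_smul]
    rw [h1, hf (δ * σ * δ⁻¹) ?_ (δ • x)]
    rw [map_mul, map_mul, Units.val_mul, Units.val_mul, hσ, hδinv, hδ]; norm_num
  -- R of a Γ₊-invariant is Γ-invariant
  have hR : ∀ f : V → ℝ, (∀ σ : Γ, (η σ : ℝ) = 1 → ∀ x, f (σ • x) = f x) →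
      ∀ γ : Γ, ∀ x, reynoldsR δ f (γ • x) = reynoldsR δ f x := by
    intro f hf γ x
    rcases hη γ with h1 | h1
    · unfold reynoldsR
      rw [hf γ h1, keyconj f hf γ h1]
    · have e1 : f (γ • x) = f (δ • x) := by
        have h2 : γ • x = (γ * δ⁻¹) • δ • x := by simp [mul_smul]
        rw [h2]
        apply hf
        rw [map_mul, Units.val_mul, hδinv, h1]; norm_num
      have e2 : f (δ • γ • x) = f x := by
        rw [← mul_smul]
        apply hf
        rw [map_mul, Units.val_mul, hδ, h1]; norm_num
      unfold reynoldsR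
      rw [e1, e2, add_comm]
  -- oddness of S f for Γ₊-invariant f
  have hSodd : ∀ f : V → ℝ, (∀ σ : Γ, (η σ : ℝ) = 1 → ∀ x, f (σ • x) = f x) →
      ∀ x, reynoldsS δ f (δ • x) = - reynoldsS δ f x := by
    intro f hf x
    unfold reynoldsS
    rw [key2 f hf x]; ring
  -- step 1 : Γ₊-equivariant decomposition of g
  have hgplus : ∀ σ : Γ, (η σ : ℝ) = 1 → ∀ x : V, g (σ • x) = σ • g x := by
    intro σ hσ x; rw [hg σ x, hσ, one_smul]
  obtain ⟨q, hqinv, hgq⟩ := hHGen g hgplus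
  -- step 2 : divided differences for each q j
  have hc : ∀ j : Fin (r + 1), ∃ c : Fin s → V → ℝ,
      (∀ i : Fin s, ∀ σ : Γ, (η σ : ℝ) = 1 → ∀ x, c i (σ • x) = c i x) ∧
      ∀ x, reynoldsS δ (q j) x = ∑ i : Fin s, c i x * reynoldsS δ (u i) x := by
    intro j
    obtain ⟨Q, hQ⟩ := huGen (q j) (hqinv j)
    obtain ⟨D, hD⟩ := exists_divided_diff s (fun v => MvPolynomial.eval v Q)
    refine ⟨fun i x => D i (fun k => u k x) (fun k => u k (δ • x)), ?_, ?_⟩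
    · intro i σ hσ x
      have e1 : (fun k => u k (σ • x)) = (fun k => u k x) := by
        funext k; exact hu k σ hσ x
      have e2 : (fun k => u k (δ • σ • x)) = (fun k => u k (δ • x)) := by
        funext k; exact keyconj (u k) (hu k) σ hσ x
      simp only [e1, e2]
    · intro x
      have h1 := hD (fun k => u k x) (fun k => u k (δ • x))
      simp only [← hQ x, ← hQ (δ • x)] at h1
      show (q j x - q j (δ • x)) / 2 = _
      rw [h1, Finset.sum_div]
      refine Finset.sum_congr rfl fun i _ => ?_
      show _ = _ * ((u i x - u i (δ • x)) / 2)
      ring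
  choose c hcinv hceq using hc
  -- symmetrized coefficients
  have hceqR : ∀ (j : Fin (r + 1)) (x : V), reynoldsS δ (q j) x
      = ∑ i : Fin s, reynoldsR δ (c j i) x * reynoldsS δ (u i) x := by
    intro j x
    have h1 := hceq j x
    have h3 : reynoldsS δ (q j) x = ∑ i : Fin s, c j i (δ • x) * reynoldsS δ (u i) x := by
      have h2 : - reynoldsS δ (q j) x
          = ∑ i : Fin s, c j i (δ • x) * (- reynoldsS δ (u i) x) := by
        rw [← hSodd (q j) (hqinv j) x, hceq j (δ • x)]
        exact Finset.sum_congr rfl fun i _ => by rw [hSodd (u i) (hu i) x]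
      have := congrArg Neg.neg h2
      rw [neg_neg] at this
      rw [this, ← Finset.sum_neg_distrib]
      exact Finset.sum_congr rfl fun i _ => by ring
    have hsum : ∑ i : Fin s, reynoldsR δ (c j i) x * reynoldsS δ (u i) x
        = (∑ i : Fin s, c j i x * reynoldsS δ (u i) x
          + ∑ i : Fin s, c j i (δ • x) * reynoldsS δ (u i) x) / 2 := by
      rw [← Finset.sum_add_distrib, Finset.sum_div]
      refine Finset.sum_congr rfl fun i _ => ?_
      show (c j i x + c j i (δ • x)) / 2 * _ = _
      ring
    rw [hsum, ← h1, ← h3]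
    ring
  -- vector decomposition of g
  have hgdec : ∀ x : V, g x = ∑ j : Fin (r + 1),
      (reynoldsR δ (q j) x • reynoldsSvec δ (H j) x
        + reynoldsS δ (q j) x • reynoldsRvec δ (H j) x) := by
    intro x
    have hgx : δ⁻¹ • g (δ • x) = - g x := by
      rw [hg δ x, hδ, smul_comm, inv_smul_smul, neg_one_smul]
    have hstart : g x = (2⁻¹ : ℝ) • (g x - δ⁻¹ • g (δ • x)) := by
      rw [hgx, sub_neg_eq_add]
      match_scalars; norm_num
    rw [hstart, hgq x, hgq (δ • x), Finset.smul_sum, ← Finset.sum_sub_distrib, Finset.smul_sum]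
    refine Finset.sum_congr rfl fun j _ => ?_
    have hcomm : δ⁻¹ • (q j (δ • x) • H j (δ • x)) = q j (δ • x) • (δ⁻¹ • H j (δ • x)) :=
      smul_comm _ _ _
    rw [hcomm]
    have ha : q j x = reynoldsR δ (q j) x + reynoldsS δ (q j) x := by
      show q j x = (q j x + q j (δ • x)) / 2 + (q j x - q j (δ • x)) / 2
      ring
    have hb : q j (δ • x) = reynoldsR δ (q j) x - reynoldsS δ (q j) x := by
      show q j (δ • x) = (q j x + q j (δ • x)) / 2 - (q j x - q j (δ • x)) / 2
      ring
    rw [ha, hb]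
    simp only [reynoldsSvec, reynoldsRvec]
    generalize δ⁻¹ • H j (δ • x) = h2
    generalize H j x = h1
    match_scalars <;> ring
  -- identification of the generators
  have hSvec0 : ∀ (j : Fin (r + 1)) (x : V),
      reynoldsSvec δ (fun y => uT 0 y • H j y) x = reynoldsSvec δ (H j) x := by
    intro j x
    unfold reynoldsSvec
    simp [huT0]
  have hSvecSucc : ∀ (i : Fin s) (j : Fin (r + 1)) (x : V),
      reynoldsSvec δ (fun y => uT i.succ y • H j y) x
        = reynoldsS δ (u i) x • reynoldsRvec δ (H j) x := by
    intro i j x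
    show (2⁻¹ : ℝ) • (uT i.succ x • H j x - δ⁻¹ • (uT i.succ (δ • x) • H j (δ • x))) = _
    rw [huTsucc i, hSodd (u i) (hu i) x]
    have hcomm : δ⁻¹ • ((- reynoldsS δ (u i) x) • H j (δ • x))
        = (- reynoldsS δ (u i) x) • (δ⁻¹ • H j (δ • x)) := smul_comm _ _ _
    rw [hcomm]
    simp only [reynoldsRvec]
    generalize δ⁻¹ • H j (δ • x) = h2
    generalize H j x = h1
    match_scalars <;> ring
  -- assemble
  refine ⟨fun i j => Fin.cases (reynoldsR δ (q j)) (fun i' => reynoldsR δ (c j i')) i, ?_, ?_⟩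
  · intro i j γ x
    induction i using Fin.cases with
    | zero =>
      simp only [Fin.cases_zero]
      exact hR (q j) (hqinv j) γ x
    | succ i' =>
      simp only [Fin.cases_succ]
      exact hR (c j i') (hcinv j i') γ x
  · intro x
    rw [Fin.sum_univ_succ]
    simp only [Fin.cases_zero, Fin.cases_succ]
    have hA : ∑ j : Fin (r + 1), reynoldsR δ (q j) x •
        reynoldsSvec δ (fun y => uT 0 y • H j y) x
        = ∑ j : Fin (r + 1), reynoldsR δ (q j) x • reynoldsSvec δ (H j) x :=
      Finset.sum_congr rfl fun j _ => by rw [hSvec0]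
    have hB : ∑ i : Fin s, ∑ j : Fin (r + 1), reynoldsR δ (c j i) x •
        reynoldsSvec δ (fun y => uT i.succ y • H j y) x
        = ∑ j : Fin (r + 1), reynoldsS δ (q j) x • reynoldsRvec δ (H j) x := by
      rw [Finset.sum_comm]
      refine Finset.sum_congr rfl fun j _ => ?_
      rw [hceqR j x, Finset.sum_smul]
      refine Finset.sum_congr rfl fun i _ => ?_
      rw [hSvecSucc i j x, smul_smul]
    rw [hA, hB, ← Finset.sum_add_distrib]
    exact hgdec x
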